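/- If (λ, x) ∈ ℝ × ℝ^{n+m} is a solution of the eigenvalue system (EV) and n ≥ 4, then λ + x_{n−2} = min(a_{n−3} + x_{n−3}, ā_{n−2} + ā_{n−1} − λ + x_n); that is, the interior variable x_{n−1} can be eliminated from the equation for x_{n−2}. -/
import Mathlib


open Finset

/-- The eigenvalue system (EV) for the 2D-traffic dynamics: `lam` is the
additive eigenvalue and `x : ℕ → ℝ` carries the coordinates `x 1, …, x (n+m)`. -/
def EVsol (n m : ℕ) (a : ℕ → ℝ) (lam : ℝ) (x : ℕ → ℝ) : Prop :=
  (∀ i : ℕ, ((2 ≤ i ∧ i ≤ n - 1) ∨ (n + 2 ≤ i ∧ i ≤ n + m - 1)) →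
      lam + x i = min (a (i - 1) + x (i - 1)) ((1 - a i) + x (i + 1))) ∧
  lam + x n = min ((1 - (a n + a (n + m))) + x 1 + x (n + 1) - lam - x (n + m))
      (a (n - 1) + x (n - 1)) ∧
  lam + x (n + m) = min ((1 - (a n + a (n + m))) + x 1 + x (n + 1) - x n)
      (a (n + m - 1) + x (n + m - 1)) ∧
  lam + x 1 = min (a n + (x n + x (n + m)) / 2) ((1 - a 1) + x 2) ∧
  lam + x (n + 1) = min (a (n + m) + (x n + x (n + m)) / 2) ((1 - a (n + 1)) + x (n + 2))

theorem stmt4 (n m : ℕ) (hn : 2 ≤ n) (hm : 2 ≤ m) (a : ℕ → ℝ)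
    (ha : ∀ i : ℕ, 1 ≤ i → i ≤ n + m → 0 ≤ a i ∧ a i ≤ 1)
    (hprio : a n + a (n + m) ≤ 1) (hn4 : 4 ≤ n)
    (lam : ℝ) (x : ℕ → ℝ) (hEV : EVsol n m a lam x) :
    lam + x (n - 2) = min (a (n - 3) + x (n - 3))
      ((1 - a (n - 2)) + (1 - a (n - 1)) - lam + x n) := by
  obtain ⟨k, rfl⟩ : ∃ k, n = k + 4 := ⟨n - 4, by omega⟩
  obtain ⟨hint, hEn, hEnm, hE1, hEn1⟩ := hEV
  have i2 : k + 4 - 2 = k + 2 := by omega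
  have i3 : k + 4 - 3 = k + 1 := by omega
  have i1 : k + 4 - 1 = k + 3 := by omega
  rw [i2, i3, i1] at *
  have e2 : lam + x (k + 2) = min (a (k + 1) + x (k + 1)) ((1 - a (k + 2)) + x (k + 3)) := by
    have h := hint (k + 2) (Or.inl ⟨by omega, by omega⟩)
    rwa [show k + 2 - 1 = k + 1 from by omega, show k + 2 + 1 = k + 3 from by omega] at h
  have e1 : lam + x (k + 3) = min (a (k + 2) + x (k + 2)) ((1 - a (k + 3)) + x (k + 4)) := by
    have h := hint (k + 3) (Or.inl ⟨by omega, by omega⟩)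
    rwa [show k + 3 - 1 = k + 2 from by omega, show k + 3 + 1 = k + 4 from by omega] at h
  have e3 : lam + x (k + 1) ≤ (1 - a (k + 1)) + x (k + 2) := by
    rcases Nat.eq_zero_or_pos k with hk | hk
    · subst hk
      rw [show (1 : ℕ) = 0 + 1 from rfl, show (2 : ℕ) = 0 + 2 from rfl] at hE1
      rw [hE1]
      exact min_le_right _ _
    · have h := hint (k + 1) (Or.inl ⟨by omega, by omega⟩)
      rw [show k + 1 - 1 = k from by omega, show k + 1 + 1 = k + 2 from by omega] at h
      rw [h]
      exact min_le_right _ _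
  rcases le_total ((1 - a (k + 3)) + x (k + 4)) (a (k + 2) + x (k + 2)) with h | h
  · have hx3 : lam + x (k + 3) = (1 - a (k + 3)) + x (k + 4) := by
      rw [e1, min_eq_right h]
    have heq : (1 - a (k + 2)) + x (k + 3)
        = (1 - a (k + 2)) + (1 - a (k + 3)) - lam + x (k + 4) := by linarith
    rw [e2, heq]
  · have hx3 : lam + x (k + 3) = a (k + 2) + x (k + 2) := by
      rw [e1, min_eq_left h]
    have hA : a (k + 1) + x (k + 1) ≤ 1 + x (k + 2) - lam := by linarith
    have hL : lam + x (k + 2) = a (k + 1) + x (k + 1) := by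
      rw [e2, min_eq_left (by linarith)]
    rw [hL, min_eq_left (by linarith)]
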